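/- arXiv:1910.03292 — 5 statements merged into one kernel-verified Lean document; each statement's English description precedes it below -/
import Mathlib

section
/- Let β > 1 be a non-integer and fix frequency vectors p̄, p̲ ∈ [0,1]^{⌈β⌉}. If Lebesgue almost every x ∈ I_β has at least one β-expansion of frequency (p̄, p̲), then Lebesgue almost every x ∈ I_β has infinitely many distinct β-expansions of frequency (p̄, p̲). -/
/-!
Suppose the points of `I_β = [0, L]`, `L = ⌊β⌋/(β-1)`, with only finitely many expansions of the
given frequency had positive measure. Prepending a digit does not change frequencies, so the number
of such expansions can only grow along the inverse branches `t ↦ (t + d)/β`. Take the least `M`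
for which the points with exactly `M` expansions form a set of positive measure, and remove from it
the null set of images, under finite compositions of inverse branches, of points with fewer than
`M`. If `y ∈ (1/β, L/β)` then both `βy` and `βy - 1` lie in `I_β`, so outside the removed set `y`
has at least `2M` expansions, and so does every image of `y`. Hence every cylinder of generation
`n` around a remaining point has a gap of length proportional to `β⁻ⁿ` free of remaining points,
which contradicts the Lebesgue density theorem.
-/

open MeasureTheory Filter

/-- The proportion of indices `i < n` where the digit sequence `ε` takes the value `k`. -/
noncomputable def freqCount (ε : ℕ → ℕ) (k : ℕ) (n : ℕ) : ℝ :=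
  (((Finset.range n).filter (fun i => ε i = k)).card : ℝ) / n

/-- `ε` is a β-expansion of `x` (digits in `{0,…,⌊β⌋}`). -/
def IsBetaExpansion (β x : ℝ) (ε : ℕ → ℕ) : Prop :=
  (∀ i, ε i ≤ ⌊β⌋₊) ∧ x = ∑' i : ℕ, (ε i : ℝ) / β ^ (i + 1)

/-- `ε` has upper frequencies `pbar` and lower frequencies `punder` for all digits `k ≤ m`. -/
def HasFrequency (ε : ℕ → ℕ) (m : ℕ) (pbar punder : ℕ → ℝ) : Prop :=
  ∀ k ≤ m, limsup (freqCount ε k) atTop = pbar k ∧ liminf (freqCount ε k) atTop = punder k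

open Set Topology Metric
open scoped ENNReal

namespace BetaExpansion

section LimsupLiminf

variable {ι α : Type*} [AddCommGroup α] [ConditionallyCompleteLinearOrder α] [DenselyOrdered α]
  [AddLeftMono α] [TopologicalSpace α] [OrderTopology α] {f : Filter ι} [f.NeBot] {u v : ι → α}

lemma limsup_add_of_tendsto_zero (hu : IsBoundedUnder (· ≤ ·) f u)
    (hu' : IsBoundedUnder (· ≥ ·) f u) (hv : Tendsto v f (𝓝 0)) :
    limsup (u + v) f = limsup u f := by
  refine le_antisymm ?_ ?_
  · simpa [hv.limsup_eq] using limsup_add_le hu' hu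
      hv.isBoundedUnder_ge.isCoboundedUnder_le hv.isBoundedUnder_le
  · simpa [hv.liminf_eq] using le_limsup_add hu hu'.isCoboundedUnder_le
      hv.isBoundedUnder_le hv.isBoundedUnder_ge

lemma liminf_add_of_tendsto_zero (hu : IsBoundedUnder (· ≤ ·) f u)
    (hu' : IsBoundedUnder (· ≥ ·) f u) (hv : Tendsto v f (𝓝 0)) :
    liminf (u + v) f = liminf u f := by
  refine le_antisymm ?_ ?_
  · have h := liminf_add_le hv.isBoundedUnder_ge hv.isBoundedUnder_le hu' hu.isCoboundedUnder_ge
    rwa [add_comm v, hv.limsup_eq, zero_add] at h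
  · simpa [hv.liminf_eq] using le_liminf_add hu' hu
      hv.isBoundedUnder_ge hv.isBoundedUnder_le.isCoboundedUnder_ge

end LimsupLiminf

lemma freqCount_nonneg (ε : ℕ → ℕ) (k n : ℕ) : 0 ≤ freqCount ε k n := by
  unfold freqCount; positivity

lemma freqCount_le_one (ε : ℕ → ℕ) (k n : ℕ) : freqCount ε k n ≤ 1 := by
  unfold freqCount
  refine div_le_one_of_le₀ ?_ n.cast_nonneg
  exact_mod_cast (Finset.card_filter_le _ _).trans (Finset.card_range n).le

lemma card_filter_range_succ (δ : ℕ → ℕ) (k n : ℕ) :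
    ((Finset.range (n + 1)).filter (fun i => δ i = k)).card
      = ((Finset.range n).filter (fun i => δ (i + 1) = k)).card + if δ 0 = k then 1 else 0 := by
  rw [Finset.card_filter, Finset.card_filter, Finset.sum_range_succ']

lemma freqCount_succ (δ : ℕ → ℕ) (k n : ℕ) :
    freqCount δ k (n + 1) = freqCount (fun i => δ (i + 1)) k n
      + ((if δ 0 = k then 1 else 0) - freqCount (fun i => δ (i + 1)) k n) / (n + 1) := by
  unfold freqCount
  rw [card_filter_range_succ]
  rcases n.eq_zero_or_pos with rfl | hn
  · simp
  · have hn : (n : ℝ) ≠ 0 := by positivity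
    push_cast
    field_simp
    ring

lemma tendsto_freqCount_succ_sub (δ : ℕ → ℕ) (k : ℕ) :
    Tendsto (fun n => freqCount δ k (n + 1) - freqCount (fun i => δ (i + 1)) k n) atTop (𝓝 0) := by
  simp only [freqCount_succ, add_sub_cancel_left]
  refine squeeze_zero_norm (fun n => ?_) tendsto_one_div_add_atTop_nhds_zero_nat
  have h0 := freqCount_nonneg (fun i => δ (i + 1)) k n
  have h1 := freqCount_le_one (fun i => δ (i + 1)) k n
  rw [norm_div, Real.norm_eq_abs, Real.norm_eq_abs, abs_of_pos (by positivity : (0:ℝ) < n + 1)]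
  gcongr
  split_ifs <;> rw [abs_le] <;> constructor <;> linarith

lemma limsup_liminf_freqCount_tail (δ : ℕ → ℕ) (k : ℕ) :
    limsup (freqCount (fun i => δ (i + 1)) k) atTop = limsup (freqCount δ k) atTop ∧
      liminf (freqCount (fun i => δ (i + 1)) k) atTop = liminf (freqCount δ k) atTop := by
  have hu : IsBoundedUnder (· ≤ ·) atTop (freqCount (fun i => δ (i + 1)) k) :=
    isBoundedUnder_of ⟨1, freqCount_le_one _ k⟩
  have hu' : IsBoundedUnder (· ≥ ·) atTop (freqCount (fun i => δ (i + 1)) k) :=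
    isBoundedUnder_of ⟨0, freqCount_nonneg _ k⟩
  have hv := tendsto_freqCount_succ_sub δ k
  have hshift : (fun n => freqCount δ k (n + 1)) = freqCount (fun i => δ (i + 1)) k
      + fun n => freqCount δ k (n + 1) - freqCount (fun i => δ (i + 1)) k n := by
    ext n; simp
  rw [← limsup_nat_add (freqCount δ k) 1, ← liminf_nat_add (freqCount δ k) 1, hshift]
  exact ⟨(limsup_add_of_tendsto_zero hu hu' hv).symm, (liminf_add_of_tendsto_zero hu hu' hv).symm⟩

lemma hasFrequency_tail_iff {δ : ℕ → ℕ} {m : ℕ} {pbar punder : ℕ → ℝ} :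
    HasFrequency (fun i => δ (i + 1)) m pbar punder ↔ HasFrequency δ m pbar punder := by
  simp only [HasFrequency, (limsup_liminf_freqCount_tail δ _).1,
    (limsup_liminf_freqCount_tail δ _).2]

section Value

variable {β : ℝ}

noncomputable def betaValue (β : ℝ) (ε : ℕ → ℕ) : ℝ := ∑' i, (ε i : ℝ) / β ^ (i + 1)

lemma digit_div_pow_le (hβ : 0 ≤ β) {m : ℕ} {ε : ℕ → ℕ} (hε : ∀ i, ε i ≤ m) (i : ℕ) :
    (ε i : ℝ) / β ^ (i + 1) ≤ m * β⁻¹ ^ (i + 1) := by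
  rw [div_eq_mul_inv, ← inv_pow]
  exact mul_le_mul_of_nonneg_right (by exact_mod_cast hε i) (by positivity)

lemma hasSum_mul_inv_pow_succ (hβ : 1 < β) (c : ℝ) :
    HasSum (fun i : ℕ => c * β⁻¹ ^ (i + 1)) (c / (β - 1)) := by
  have h := (hasSum_geometric_of_lt_one (by positivity) (inv_lt_one_of_one_lt₀ hβ)).mul_left
    (c * β⁻¹)
  have hsum : c * β⁻¹ * (1 - β⁻¹)⁻¹ = c / (β - 1) := by
    field_simp
  rw [hsum] at h
  exact h.congr_fun fun i => by ring

lemma summable_digits_div_pow (hβ : 1 < β) {m : ℕ} {ε : ℕ → ℕ} (hε : ∀ i, ε i ≤ m) :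
    Summable fun i => (ε i : ℝ) / β ^ (i + 1) :=
  (hasSum_mul_inv_pow_succ hβ m).summable.of_nonneg_of_le (fun i => by positivity)
    (digit_div_pow_le (zero_le_one.trans hβ.le) hε)

lemma betaValue_mem_Icc (hβ : 1 < β) {m : ℕ} {ε : ℕ → ℕ} (hε : ∀ i, ε i ≤ m) :
    betaValue β ε ∈ Icc 0 (m / (β - 1)) :=
  ⟨tsum_nonneg fun i => by positivity, hasSum_le (digit_div_pow_le (zero_le_one.trans hβ.le) hε)
    (summable_digits_div_pow hβ hε).hasSum (hasSum_mul_inv_pow_succ hβ m)⟩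

lemma betaValue_eq_tail (hβ : 1 < β) {m : ℕ} {δ : ℕ → ℕ} (hδ : ∀ i, δ (i + 1) ≤ m) :
    betaValue β δ = (betaValue β (fun i => δ (i + 1)) + δ 0) / β := by
  have hshift : ∀ i, (δ (i + 1) : ℝ) / β ^ (i + 1 + 1) = (δ (i + 1) : ℝ) / β ^ (i + 1) / β :=
    fun i => by rw [pow_succ, div_mul_eq_div_div]
  have htail : Summable fun i => (δ (i + 1) : ℝ) / β ^ (i + 1 + 1) := by
    simpa only [hshift] using (summable_digits_div_pow hβ hδ).div_const β
  unfold betaValue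
  rw [tsum_eq_zero_add' (f := fun i => (δ i : ℝ) / β ^ (i + 1)) htail, tsum_congr hshift,
    tsum_div_const]
  ring

def cons (a : ℕ) (ε : ℕ → ℕ) : ℕ → ℕ
  | 0 => a
  | n + 1 => ε n

lemma cons_injective (a : ℕ) : Function.Injective (cons a) :=
  fun _ _ h => funext fun n => congrFun h (n + 1)

lemma betaValue_cons (hβ : 1 < β) {m : ℕ} {ε : ℕ → ℕ} (hε : ∀ i, ε i ≤ m) (a : ℕ) :
    betaValue β (cons a ε) = (betaValue β ε + a) / β :=
  betaValue_eq_tail hβ hε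

/-- The composite of the inverse branches `t ↦ (t + d) / β` of the β-transformation along `w`:
if `ε` is an expansion of `t`, then `w` followed by `ε` is an expansion of `invBranches β w t`. -/
noncomputable def invBranches (β : ℝ) (w : List ℕ) (t : ℝ) : ℝ :=
  w.foldr (fun d t => (t + d) / β) t

@[simp] lemma invBranches_nil (t : ℝ) : invBranches β [] t = t := rfl

@[simp] lemma invBranches_cons (d : ℕ) (w : List ℕ) (t : ℝ) :
    invBranches β (d :: w) t = (invBranches β w t + d) / β := rfl

lemma invBranches_append_singleton (w : List ℕ) (d : ℕ) (t : ℝ) :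
    invBranches β (w ++ [d]) t = invBranches β w ((t + d) / β) := by
  simp [invBranches, List.foldr_append]

lemma invBranches_eq_mul_add (w : List ℕ) (t : ℝ) :
    invBranches β w t = β⁻¹ ^ w.length * t + invBranches β w 0 := by
  induction w with
  | nil => simp
  | cons d w ih =>
    rw [invBranches_cons, invBranches_cons, ih, List.length_cons]
    ring

end Value

section Expansions

variable {β : ℝ} {pbar punder : ℕ → ℝ}

def freqExpansions (β : ℝ) (pbar punder : ℕ → ℝ) (x : ℝ) : Set (ℕ → ℕ) :=
  {ε | IsBetaExpansion β x ε ∧ HasFrequency ε ⌊β⌋₊ pbar punder}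

def expansionLevel (β : ℝ) (pbar punder : ℕ → ℝ) (M : ℕ) : Set ℝ :=
  {x ∈ Icc 0 ((⌊β⌋₊ : ℝ) / (β - 1)) | (freqExpansions β pbar punder x).encard = M}

lemma cons_mem_freqExpansions (hβ : 1 < β) {a : ℕ} (ha : a ≤ ⌊β⌋₊) {y : ℝ} {ε : ℕ → ℕ}
    (hε : ε ∈ freqExpansions β pbar punder y) :
    cons a ε ∈ freqExpansions β pbar punder ((y + a) / β) := by
  obtain ⟨⟨hdigits, rfl⟩, hfreq⟩ := hε
  refine ⟨⟨fun i => ?_, (betaValue_cons hβ hdigits a).symm⟩, hasFrequency_tail_iff.mp hfreq⟩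
  cases i with
  | zero => exact ha
  | succ i => exact hdigits i

lemma encard_le_encard_div (hβ : 1 < β) {a : ℕ} (ha : a ≤ ⌊β⌋₊) (y : ℝ) :
    (freqExpansions β pbar punder y).encard
      ≤ (freqExpansions β pbar punder ((y + a) / β)).encard := by
  rw [← (cons_injective a).encard_image]
  exact Set.encard_le_encard (image_subset_iff.mpr fun ε hε => cons_mem_freqExpansions hβ ha hε)

lemma encard_le_encard_invBranches (hβ : 1 < β) {w : List ℕ} (hw : ∀ d ∈ w, d ≤ ⌊β⌋₊) (y : ℝ) :
    (freqExpansions β pbar punder y).encard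
      ≤ (freqExpansions β pbar punder (invBranches β w y)).encard := by
  induction w with
  | nil => rfl
  | cons d w ih =>
    rw [List.forall_mem_cons] at hw
    exact (ih hw.2).trans (encard_le_encard_div hβ hw.1 _)

lemma encard_add_encard_le (hβ : 1 < β) {a b : ℕ} (ha : a ≤ ⌊β⌋₊) (hb : b ≤ ⌊β⌋₊) (hab : a ≠ b)
    (y : ℝ) :
    (freqExpansions β pbar punder (β * y - a)).encard
        + (freqExpansions β pbar punder (β * y - b)).encard
      ≤ (freqExpansions β pbar punder y).encard := by
  have hβ0 : β ≠ 0 := (zero_lt_one.trans hβ).ne'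
  have hy : ∀ d : ℕ, (β * y - d + d) / β = y := fun d => by field_simp; ring
  have hdisj : Disjoint (cons a '' freqExpansions β pbar punder (β * y - a))
      (cons b '' freqExpansions β pbar punder (β * y - b)) := by
    rw [Set.disjoint_left]
    rintro _ ⟨ε, -, rfl⟩ ⟨ε', -, h⟩
    exact hab (congrFun h 0).symm
  rw [← (cons_injective a).encard_image (freqExpansions β pbar punder (β * y - a)),
    ← (cons_injective b).encard_image (freqExpansions β pbar punder (β * y - b)),
    ← Set.encard_union_eq hdisj]
  refine Set.encard_le_encard (union_subset ?_ ?_) <;>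
    refine image_subset_iff.mpr fun ε hε => ?_
  · simpa only [mem_preimage, hy] using cons_mem_freqExpansions hβ ha hε
  · simpa only [mem_preimage, hy] using cons_mem_freqExpansions hβ hb hε

lemma exists_invBranches_eq_betaValue (hβ : 1 < β) {m : ℕ} {ε : ℕ → ℕ} (hε : ∀ i, ε i ≤ m)
    (n : ℕ) : ∃ w : List ℕ, w.length = n ∧ (∀ d ∈ w, d ≤ m) ∧
      invBranches β w (betaValue β fun i => ε (i + n)) = betaValue β ε := by
  induction n generalizing ε with
  | zero => exact ⟨[], rfl, by simp, rfl⟩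
  | succ n ih =>
    obtain ⟨w, hlen, hw, hval⟩ := ih (ε := fun i => ε (i + 1)) fun i => hε _
    refine ⟨ε 0 :: w, by simp [hlen], List.forall_mem_cons.mpr ⟨hε 0, hw⟩, ?_⟩
    simp only [add_assoc] at hval
    rw [invBranches_cons, hval, betaValue_eq_tail hβ fun i => hε _]

end Expansions

lemma measure_eq_zero_of_frequently_density_le {α : Type*} [MetricSpace α] [MeasurableSpace α]
    [BorelSpace α] [SecondCountableTopology α] [HasBesicovitchCovering α] (μ : Measure α)
    [IsLocallyFiniteMeasure μ] {s : Set α} {c : ℝ≥0∞} (hc : c < 1)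
    (h : ∀ x ∈ s, ∃ᶠ r in 𝓝[>] 0, μ (s ∩ closedBall x r) / μ (closedBall x r) ≤ c) :
    μ s = 0 := by
  set T := {x | Tendsto (fun r => μ (s ∩ closedBall x r) / μ (closedBall x r)) (𝓝[>] 0) (𝓝 1)}
  have hsT : s ⊆ Tᶜ := fun x hx hT =>
    have ⟨_, hle, hlt⟩ := ((h x hx).and_eventually (hT.eventually (lt_mem_nhds hc))).exists
    hle.not_gt hlt
  refine le_antisymm ?_ bot_le
  calc μ s = μ (Tᶜ ∩ s) := by rw [inter_eq_right.mpr hsT]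
    _ ≤ μ.restrict s Tᶜ := Measure.le_restrict_apply _ _
    _ = 0 := ae_iff.mp (Besicovitch.ae_tendsto_measure_inter_div μ s)

lemma volume_inter_closedBall_div_le_of_disjoint {s J : Set ℝ} {x r δ : ℝ} (hr : 0 < r)
    (hδ : 0 ≤ δ) (hJm : MeasurableSet J) (hJ : J ⊆ closedBall x r) (hsJ : Disjoint s J)
    (hvol : volume J = ENNReal.ofReal (δ * r)) :
    volume (s ∩ closedBall x r) / volume (closedBall x r) ≤ ENNReal.ofReal (1 - δ / 2) := by
  have hsub : s ∩ closedBall x r ⊆ closedBall x r \ J := fun y hy =>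
    ⟨hy.2, hsJ.notMem_of_mem_left hy.1⟩
  refine ENNReal.div_le_of_le_mul ((measure_mono hsub).trans ?_)
  rw [measure_sdiff hJ hJm.nullMeasurableSet (hvol ▸ ENNReal.ofReal_ne_top), hvol,
    Real.volume_closedBall, ← ENNReal.ofReal_sub _ (by positivity),
    ← ENNReal.ofReal_mul' (by positivity)]
  exact ENNReal.ofReal_le_ofReal (le_of_eq (by ring))

lemma volume_inter_closedBall_div_le_of_disjoint_image_Ioo {A : Set ℝ} {a b ℓ u v y : ℝ}
    (ha : 0 < a) (hu : 0 ≤ u) (huv : u < v) (hv : v ≤ ℓ) (hy : y ∈ Icc 0 ℓ)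
    (hA : Disjoint A ((a * · + b) '' Ioo u v)) :
    volume (A ∩ closedBall (a * y + b) (a * ℓ)) / volume (closedBall (a * y + b) (a * ℓ))
      ≤ ENNReal.ofReal (1 - (v - u) / ℓ / 2) := by
  have hℓ : 0 < ℓ := hu.trans_lt (huv.trans_le hv)
  rw [image_affine_Ioo ha] at hA
  refine volume_inter_closedBall_div_le_of_disjoint (by positivity)
    (div_nonneg (sub_nonneg.mpr huv.le) hℓ.le) measurableSet_Ioo (fun t ht => ?_) hA ?_
  · rw [mem_closedBall, Real.dist_eq, abs_le]
    obtain ⟨ht₁, ht₂⟩ := ht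
    obtain ⟨hy₀, hyℓ⟩ := hy
    constructor <;> nlinarith
  · rw [Real.volume_Ioo]
    congr 1
    field_simp
    ring

lemma tendsto_inv_pow_mul_nhdsGT {β : ℝ} (hβ : 1 < β) {ℓ : ℝ} (hℓ : 0 < ℓ) :
    Tendsto (fun n : ℕ => β⁻¹ ^ n * ℓ) atTop (𝓝[>] 0) := by
  have hβ0 : 0 < β := zero_lt_one.trans hβ
  refine tendsto_nhdsWithin_iff.mpr ⟨?_, Eventually.of_forall fun n => mem_Ioi.mpr (by positivity)⟩
  simpa using (tendsto_pow_atTop_nhds_zero_of_lt_one (inv_nonneg.mpr hβ0.le)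
    (inv_lt_one_of_one_lt₀ hβ)).mul_const ℓ

lemma volume_image_invBranches_eq_zero {β : ℝ} (w : List ℕ) {Z : Set ℝ} (hZ : volume Z = 0) :
    volume (invBranches β w '' Z) = 0 := by
  rw [funext (invBranches_eq_mul_add w)]
  exact addHaar_image_eq_zero_of_differentiableOn_of_addHaar_eq_zero volume (by fun_prop) hZ

section Multiplicity

variable {β : ℝ} {pbar punder : ℕ → ℝ}

lemma one_lt_floor_div_sub_one (hβ : 1 < β) : 1 < (⌊β⌋₊ : ℝ) / (β - 1) := by
  rw [one_lt_div (sub_pos.mpr hβ)]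
  linarith [Nat.lt_floor_add_one β]

lemma exists_encard_lt_of_mem_image_Ioo (hβ : 1 < β) {M : ℕ} (hM : M ≠ 0) {w : List ℕ}
    (hw : ∀ d ∈ w, d ≤ ⌊β⌋₊) {x : ℝ} (hx : (freqExpansions β pbar punder x).encard = M)
    (hxw : x ∈ invBranches β w '' Ioo (1 / β) ((⌊β⌋₊ : ℝ) / (β - 1) / β)) :
    ∃ v : List ℕ, ∃ z ∈ Icc 0 ((⌊β⌋₊ : ℝ) / (β - 1)),
      (freqExpansions β pbar punder z).encard < M ∧ invBranches β v z = x := by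
  obtain ⟨y, ⟨hy₁, hy₂⟩, rfl⟩ := hxw
  have hβ0 : 0 < β := zero_lt_one.trans hβ
  have h1 : 1 < β * y := by rwa [div_lt_iff₀' hβ0] at hy₁
  have h2 : β * y < ⌊β⌋₊ / (β - 1) := by rwa [lt_div_iff₀' hβ0] at hy₂
  by_contra! hmany
  have hchild : ∀ d : ℕ, d ≤ 1 → M ≤ (freqExpansions β pbar punder (β * y - d)).encard := by
    intro d hd
    refine le_of_not_gt fun hlt => hmany (w ++ [d]) (β * y - d) ⟨?_, ?_⟩ hlt ?_
    · have : (d : ℝ) ≤ 1 := by exact_mod_cast hd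
      linarith
    · linarith [d.cast_nonneg (α := ℝ)]
    · rw [invBranches_append_singleton]
      congr 1
      field_simp
      ring
  have hfloor : 1 ≤ ⌊β⌋₊ := Nat.le_floor (by exact_mod_cast hβ.le)
  have hsum : (M : ℕ∞) + M ≤ M :=
    calc (M : ℕ∞) + M ≤ (freqExpansions β pbar punder (β * y - (0 : ℕ))).encard
          + (freqExpansions β pbar punder (β * y - (1 : ℕ))).encard :=
          add_le_add (hchild 0 zero_le_one) (hchild 1 le_rfl)
      _ ≤ (freqExpansions β pbar punder y).encard :=
          encard_add_encard_le hβ (Nat.zero_le _) hfloor zero_ne_one y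
      _ ≤ (freqExpansions β pbar punder (invBranches β w y)).encard :=
          encard_le_encard_invBranches hβ hw y
      _ = M := hx
  norm_cast at hsum
  omega

lemma volume_expansionLevel_eq_zero_of_lt (hβ : 1 < β) {M : ℕ} (hM : M ≠ 0)
    (hlt : ∀ m < M, volume (expansionLevel β pbar punder m) = 0) :
    volume (expansionLevel β pbar punder M) = 0 := by
  set L : ℝ := ⌊β⌋₊ / (β - 1)
  have hL : 1 < L := one_lt_floor_div_sub_one hβ
  set Z := {z ∈ Icc 0 L | (freqExpansions β pbar punder z).encard < M}
  have hZ : volume Z = 0 := by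
    refine measure_mono_null (fun z ⟨hzI, hzM⟩ => ?_)
      (measure_iUnion_null fun m => measure_iUnion_null fun hm => hlt m hm)
    have hfin := ENat.natCast_toNat hzM.ne_top
    refine mem_iUnion₂.mpr ⟨_, ?_, hzI, hfin.symm⟩
    exact_mod_cast hfin ▸ hzM
  set R := ⋃ v : List ℕ, invBranches β v '' Z
  have hR : volume R = 0 := measure_iUnion_null fun v => volume_image_invBranches_eq_zero v hZ
  rw [← measure_sdiff_null hR]
  refine measure_eq_zero_of_frequently_density_le volume
    ((ENNReal.ofReal_lt_one (p := 1 - (L / β - 1 / β) / L / 2)).mpr ?_) ?_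
  · have : 0 < (L / β - 1 / β) / L := by
      apply div_pos _ (zero_lt_one.trans hL)
      rw [sub_pos]
      gcongr
    linarith
  rintro x ⟨⟨hxI, hxM⟩, hxR⟩
  obtain ⟨ε, ⟨hdigits, hx : x = betaValue β ε⟩, -⟩ : (freqExpansions β pbar punder x).Nonempty := by
    rw [← Set.encard_pos, hxM]
    exact_mod_cast Nat.pos_of_ne_zero hM
  refine (tendsto_inv_pow_mul_nhdsGT hβ (zero_lt_one.trans hL)).frequently
    (Frequently.of_forall fun n => ?_)
  obtain ⟨w, hlen, hw, hval⟩ := exists_invBranches_eq_betaValue hβ hdigits n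
  have hgap : Disjoint (expansionLevel β pbar punder M \ R)
      (invBranches β w '' Ioo (1 / β) (L / β)) := by
    refine Set.disjoint_right.mpr fun t ht ⟨⟨_, htM⟩, htR⟩ => htR ?_
    obtain ⟨v, z, hz, hzM, rfl⟩ := exists_encard_lt_of_mem_image_Ioo hβ hM hw htM ht
    exact mem_iUnion.mpr ⟨v, z, ⟨hz, hzM⟩, rfl⟩
  rw [funext (invBranches_eq_mul_add w), hlen] at hgap
  rw [hx, ← hval, invBranches_eq_mul_add, hlen]
  exact volume_inter_closedBall_div_le_of_disjoint_image_Ioo (by positivity) (by positivity)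
    (by gcongr) (div_le_self (by positivity) hβ.le) (betaValue_mem_Icc hβ fun i => hdigits _) hgap

lemma volume_expansionLevel_eq_zero (hβ : 1 < β)
    (h0 : volume ({x | ¬ (freqExpansions β pbar punder x).Nonempty}
      ∩ Icc 0 ((⌊β⌋₊ : ℝ) / (β - 1))) = 0)
    (M : ℕ) :
    volume (expansionLevel β pbar punder M) = 0 := by
  induction M using Nat.strong_induction_on with
  | _ M ih =>
    rcases eq_or_ne M 0 with rfl | hM
    · convert h0 using 2
      ext x
      simp [expansionLevel, Set.not_nonempty_iff_eq_empty, and_comm]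
    · exact volume_expansionLevel_eq_zero_of_lt hβ hM ih

end Multiplicity

end BetaExpansion

open BetaExpansion in
theorem stmt3_general (β : ℝ) (hβ : 1 < β)
    (pbar punder : ℕ → ℝ)
    (hae : ∀ᵐ x ∂(volume.restrict (Set.Icc 0 ((⌊β⌋₊ : ℝ) / (β - 1)))),
      ∃ ε : ℕ → ℕ, IsBetaExpansion β x ε ∧ HasFrequency ε ⌊β⌋₊ pbar punder) :
    ∀ᵐ x ∂(volume.restrict (Set.Icc 0 ((⌊β⌋₊ : ℝ) / (β - 1)))),
      {ε : ℕ → ℕ | IsBetaExpansion β x ε ∧ HasFrequency ε ⌊β⌋₊ pbar punder}.Infinite := by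
  rw [ae_iff, Measure.restrict_apply' measurableSet_Icc] at hae ⊢
  refine measure_mono_null (fun x ⟨hfin, hxI⟩ => ?_)
    (measure_iUnion_null (volume_expansionLevel_eq_zero hβ hae))
  exact mem_iUnion.mpr
    ⟨_, hxI, (ENat.natCast_toNat (encard_ne_top_iff.mpr (not_infinite.mp hfin))).symm⟩

theorem stmt3 (β : ℝ) (hβ : 1 < β) (hni : ∀ n : ℕ, β ≠ n)
    (pbar punder : ℕ → ℝ)
    (hpbar : ∀ k ≤ ⌊β⌋₊, pbar k ∈ Set.Icc (0 : ℝ) 1)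
    (hpunder : ∀ k ≤ ⌊β⌋₊, punder k ∈ Set.Icc (0 : ℝ) 1)
    (hae : ∀ᵐ x ∂(volume.restrict (Set.Icc 0 ((⌊β⌋₊ : ℝ) / (β - 1)))),
      ∃ ε : ℕ → ℕ, IsBetaExpansion β x ε ∧ HasFrequency ε ⌊β⌋₊ pbar punder) :
    ∀ᵐ x ∂(volume.restrict (Set.Icc 0 ((⌊β⌋₊ : ℝ) / (β - 1)))),
      {ε : ℕ → ℕ | IsBetaExpansion β x ε ∧ HasFrequency ε ⌊β⌋₊ pbar punder}.Infinite :=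
  stmt3_general β hβ pbar punder hae
end

section
/- Let β ∈ (1,2) with β^m = β^{m−1}+⋯+β+1 for some integer m ≥ 2, let b ∈ [0, 1/(β−1) − 1), and define T : [0,1/(β−1)] → ℝ by T(x) = βx for x < (b+1)/β and T(x) = βx − 1 otherwise. Then for all 1 ≤ n ≤ m−1: T^n(b) = β^n b < (b+1)/β ≤ β^n b + β^n − β^{n−1} − ⋯ − β − 1 = T^n(b+1). -/
/-!
Multiplying the defining equation of `β` by `β - 1` gives `β ^ m (2 - β) = 1`, hence
`β ^ k (2 - β) ≤ 1` for `k ≤ m`, while `b < 1 / (β - 1) - 1` means `b (β - 1) < 2 - β`. These two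
facts keep the orbit of `b` below the breakpoint `(b + 1) / β` and the orbit of `b + 1` above it for
the first `m - 1` steps, so `T` acts on them by `x ↦ β x` and by `x ↦ β x - 1` respectively.
-/

open Finset

theorem Function.iterate_eq_iterate_of_forall {α : Type*} {T f : α → α} {p : α → Prop}
    (hT : ∀ x, p x → T x = f x) {x : α} {n : ℕ} (h : ∀ i < n, p (f^[i] x)) :
    T^[n] x = f^[n] x := by
  induction n with
  | zero => rfl
  | succ n ih =>
    rw [iterate_succ_apply', iterate_succ_apply', ih fun i hi => h i (by omega),
      hT _ (h n n.lt_succ_self)]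

theorem iterate_mul_sub_one_apply {R : Type*} [CommRing R] (β y : R) (n : ℕ) :
    (fun x => β * x - 1)^[n] y = β ^ n * y - ∑ i ∈ range n, β ^ i := by
  induction n with
  | zero => simp
  | succ n ih =>
    rw [Function.iterate_succ_apply', ih, geom_sum_succ]
    ring

theorem pow_mul_two_sub_eq_one {R : Type*} [CommRing R] {β : R} {m : ℕ}
    (h : β ^ m = ∑ i ∈ range m, β ^ i) : β ^ m * (2 - β) = 1 := by
  have hgeom := geom_sum_mul β m
  rw [← h] at hgeom
  linear_combination -hgeom

theorem pow_mul_two_sub_le_one {β : ℝ} {m k : ℕ} (hβ : 1 ≤ β) (hm : β ^ m * (2 - β) = 1)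
    (hk : k ≤ m) : β ^ k * (2 - β) ≤ 1 := by
  have h2 : 0 < 2 - β := pos_of_mul_pos_right (hm ▸ one_pos) (by positivity)
  calc β ^ k * (2 - β) ≤ β ^ m * (2 - β) := by gcongr
    _ = 1 := hm

section

variable {β b : ℝ} {k : ℕ}

theorem pow_mul_lt_add_one_div (hβ : 1 < β) (hk : β ^ (k + 1) * (2 - β) ≤ 1) (hb0 : 0 ≤ b)
    (hb : b < 1 / (β - 1) - 1) : β ^ k * b < (b + 1) / β := by
  have hb' : b * (β - 1) < 2 - β := by
    have := mul_lt_mul_of_pos_right hb (sub_pos.2 hβ)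
    rw [sub_mul, one_div_mul_cancel (sub_pos.2 hβ).ne', one_mul] at this
    linarith
  have h2 : 0 < 2 - β := lt_of_le_of_lt (mul_nonneg hb0 (sub_pos.2 hβ).le) hb'
  rw [lt_div_iff₀ (by positivity), mul_right_comm, ← pow_succ]
  refine lt_of_mul_lt_mul_left ?_ h2.le
  nlinarith [mul_le_mul_of_nonneg_left hk hb0]

theorem add_one_div_le_pow_mul_sub_geom_sum (hβ : 1 < β) (hk : β ^ (k + 1) * (2 - β) ≤ 1)
    (hb0 : 0 ≤ b) : (b + 1) / β ≤ β ^ k * (b + 1) - ∑ i ∈ range k, β ^ i := by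
  have hgeom := geom_sum_mul β k
  have hpow : 1 ≤ β ^ (k + 1) := one_le_pow₀ hβ.le
  rw [div_le_iff₀ (by positivity)]
  refine le_of_mul_le_mul_right ?_ (sub_pos.2 hβ)
  -- the difference of the two sides is `b (β - 1) (β ^ (k + 1) - 1) + (1 - β ^ (k + 1) (2 - β))`
  linear_combination mul_nonneg (mul_nonneg hb0 (sub_pos.2 hβ).le) (sub_nonneg.2 hpow) + hk +
    β * hgeom

end

theorem stmt9_general (β : ℝ) (m : ℕ) (hβ : β ∈ Set.Ioo (1 : ℝ) 2)
    (hpg : β ^ m = ∑ i ∈ Finset.range m, β ^ i)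
    (b : ℝ) (hb : b ∈ Set.Ico 0 (1 / (β - 1) - 1))
    (T : ℝ → ℝ) (hT : ∀ x, T x = if x < (b + 1) / β then β * x else β * x - 1) :
    ∀ n : ℕ, 1 ≤ n → n ≤ m - 1 →
      T^[n] b = β ^ n * b ∧
      β ^ n * b < (b + 1) / β ∧
      (b + 1) / β ≤ β ^ n * b + β ^ n - ∑ i ∈ Finset.range n, β ^ i ∧
      T^[n] (b + 1) = β ^ n * b + β ^ n - ∑ i ∈ Finset.range n, β ^ i := by
  intro n _ hn
  have hpow : ∀ i ≤ n, β ^ (i + 1) * (2 - β) ≤ 1 := fun i hi =>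
    pow_mul_two_sub_le_one hβ.1.le (pow_mul_two_sub_eq_one hpg) (by omega)
  have hlt : ∀ i ≤ n, β ^ i * b < (b + 1) / β := fun i hi =>
    pow_mul_lt_add_one_div hβ.1 (hpow i hi) hb.1 hb.2
  have hle : ∀ i ≤ n, (b + 1) / β ≤ β ^ i * (b + 1) - ∑ j ∈ range i, β ^ j := fun i hi =>
    add_one_div_le_pow_mul_sub_geom_sum hβ.1 (hpow i hi) hb.1
  have horbit_b : T^[n] b = β ^ n * b := by
    rw [Function.iterate_eq_iterate_of_forall (f := (β * ·)) (fun x hx => by rw [hT, if_pos hx])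
      fun i hi => by rw [mul_left_iterate_apply]; exact hlt i hi.le, mul_left_iterate_apply]
  have horbit_b_add_one : T^[n] (b + 1) = β ^ n * (b + 1) - ∑ i ∈ range n, β ^ i := by
    rw [Function.iterate_eq_iterate_of_forall (f := fun x => β * x - 1)
      (fun x hx => by rw [hT, if_neg (not_lt.2 hx)])
      fun i hi => by rw [iterate_mul_sub_one_apply]; exact hle i hi.le, iterate_mul_sub_one_apply]
  rw [← mul_add_one]
  exact ⟨horbit_b, hlt n le_rfl, hle n le_rfl, horbit_b_add_one⟩

theorem stmt9 (β : ℝ) (m : ℕ) (hm : 2 ≤ m) (hβ : β ∈ Set.Ioo (1 : ℝ) 2)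
    (hpg : β ^ m = ∑ i ∈ Finset.range m, β ^ i)
    (b : ℝ) (hb : b ∈ Set.Ico 0 (1 / (β - 1) - 1))
    (T : ℝ → ℝ) (hT : ∀ x, T x = if x < (b + 1) / β then β * x else β * x - 1) :
    ∀ n : ℕ, 1 ≤ n → n ≤ m - 1 →
      T^[n] b = β ^ n * b ∧
      β ^ n * b < (b + 1) / β ∧
      (b + 1) / β ≤ β ^ n * b + β ^ n - ∑ i ∈ Finset.range n, β ^ i ∧
      T^[n] (b + 1) = β ^ n * b + β ^ n - ∑ i ∈ Finset.range n, β ^ i :=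
  stmt9_general β m hβ hpg b hb T hT
end

section
/- Let β ∈ (1,2) with β^m = β^{m−1}+⋯+β+1 for some integer m ≥ 2, and b ∈ [0, 1/(β−1) − 1). Define T(x) = βx for x ∈ [0,(b+1)/β) and T(x) = βx − 1 for x ∈ [(b+1)/β, 1/(β−1)]. Then T^n(b) = T^n(b+1) for all n ≥ m. -/
theorem stmt10 (β : ℝ) (m : ℕ) (hm : 2 ≤ m) (hβ : β ∈ Set.Ioo (1 : ℝ) 2)
    (hpg : β ^ m = ∑ i ∈ Finset.range m, β ^ i)
    (b : ℝ) (hb : b ∈ Set.Ico 0 (1 / (β - 1) - 1))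
    (T : ℝ → ℝ) (hT : ∀ x, T x = if x < (b + 1) / β then β * x else β * x - 1) :
    ∀ n : ℕ, m ≤ n → T^[n] b = T^[n] (b + 1) := by
  obtain ⟨hβ1, hβ2⟩ := hβ
  obtain ⟨hb0, hb1⟩ := hb
  have hβ0 : (0:ℝ) < β := by linarith
  have hβ1' : (0:ℝ) < β - 1 := by linarith
  have h2β : (0:ℝ) < 2 - β := by linarith
  have hgs : ∀ j : ℕ, (∑ i ∈ Finset.range j, β ^ i) * (β - 1) = β ^ j - 1 :=
    fun j => geom_sum_mul β j
  have hβm : β ^ m * (2 - β) = 1 := by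
    have h := hgs m
    rw [← hpg] at h
    nlinarith [h]
  have hbm : b * (β - 1) < 2 - β := by
    have h1 : b + 1 < 1 / (β - 1) := by linarith
    have h2 : (b + 1) * (β - 1) < 1 := by
      rw [← lt_div_iff₀ hβ1']; exact h1
    nlinarith [h2]
  -- orbit of b
  have hA : ∀ k, k ≤ m → T^[k] b = β ^ k * b := by
    intro k hk
    induction k with
    | zero => simp
    | succ k ih =>
      have hk' : k ≤ m := Nat.le_of_succ_le hk
      rw [Function.iterate_succ_apply', ih hk', hT]
      have hpow : β ^ (k+1) ≤ β ^ m := pow_le_pow_right₀ hβ1.le hk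
      have hb' : β ^ (k+1) * b ≤ β ^ m * b := mul_le_mul_of_nonneg_right hpow hb0
      have hkey : β ^ m * b * (2 - β) = b := by
        rw [mul_comm (β ^ m) b, mul_assoc, hβm, mul_one]
      have hmb : β ^ m * b < b + 1 := by nlinarith [hkey, hbm, h2β]
      have hlt : β ^ k * b < (b + 1) / β := by
        rw [lt_div_iff₀ hβ0]
        calc β ^ k * b * β = β ^ (k+1) * b := by ring
          _ ≤ β ^ m * b := hb'
          _ < b + 1 := hmb
      rw [if_pos hlt]; ring
  -- orbit of b+1
  have hB : ∀ k, k ≤ m →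
      T^[k] (b+1) = β ^ k * (b+1) - ∑ i ∈ Finset.range k, β ^ i := by
    intro k hk
    induction k with
    | zero => simp
    | succ k ih =>
      have hk' : k ≤ m := Nat.le_of_succ_le hk
      rw [Function.iterate_succ_apply', ih hk', hT]
      set S : ℝ := ∑ i ∈ Finset.range k, β ^ i with hS
      have hSk : S * (β - 1) = β ^ k - 1 := hgs k
      have hpow : β ^ (k+1) ≤ β ^ m := pow_le_pow_right₀ hβ1.le hk
      have hpow1 : (1:ℝ) ≤ β ^ (k+1) := one_le_pow₀ hβ1.le
      have h1 : (β ^ m - β ^ (k+1)) * (2 - β) ≥ 0 :=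
        mul_nonneg (by linarith) (by linarith)
      have h2 : (β ^ (k+1) - 1) * (b * (β - 1)) ≥ 0 :=
        mul_nonneg (by linarith) (mul_nonneg hb0 hβ1'.le)
      have hge : (b + 1) / β ≤ β ^ k * (b+1) - S := by
        rw [div_le_iff₀ hβ0]
        have hmul : (b + 1) * (β - 1) ≤ (β ^ k * (b+1) - S) * β * (β - 1) := by
          have hexp : (β ^ k * (b+1) - S) * β * (β - 1)
              = β ^ (k+1) * (b+1) * (β - 1) - β * (β ^ k - 1) := by
            rw [← hSk]; ring
          rw [hexp]
          nlinarith [h1, h2, hβm, pow_succ β k]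
        exact le_of_mul_le_mul_right (by linarith [hmul]) hβ1'
      have hS1 : (∑ i ∈ Finset.range (k+1), β ^ i) = β * S + 1 :=
        mul_right_cancel₀ hβ1'.ne' (by rw [hgs (k+1)]; linear_combination (-β) * hSk)
      rw [if_neg (not_lt.mpr hge), hS1]
      ring
  -- equality at step m
  have hmeq : T^[m] b = T^[m] (b + 1) := by
    rw [hA m le_rfl, hB m le_rfl, ← hpg]
    ring
  intro n hn
  have h1 : n - m + m = n := Nat.sub_add_cancel hn
  have h2 := Function.iterate_add_apply T (n - m) m b
  have h3 := Function.iterate_add_apply T (n - m) m (b + 1)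
  rw [h1] at h2 h3
  rw [h2, h3, hmeq]
end

section
/- Let β > 2 be a non-integer and define the map T on I_β = [0, ⌊β⌋/(β−1)] by T(x) = βx − k for x ∈ [z_k, z_{k+1}) (with T(x) = βx on [0,z_1) and T(x) = βx − ⌊β⌋ on [z_{⌊β⌋}, ⌊β⌋/(β−1)]), where z_k are as in the symmetric partition. Then T commutes with the reflection σ(x) = ⌊β⌋/(β−1) − x up to the partition: for every x that is not a preimage under iterates of T of a partition point z_k, and every n ≥ 0 and k ∈ {0,...,⌊β⌋}, T^n(x) ∈ (z_k, z_{k+1}) if and only if T^n(σ(x)) ∈ (z_{⌊β⌋−k}, z_{⌈β⌉−k}). -/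
/-!
Write `M = ⌊β⌋` and `L = M / (β - 1)`, so that `σ y = L - y` and `β L = L + M`.
The partition is symmetric, `z j + z (M + 1 - j) = L`, hence `σ` maps the `k`-th cell onto
the `(M - k)`-th one. On the `k`-th cell `T y = β y - k`, so for `y` off the partition points
`T (σ y) = β (L - y) - (M - k) = L - T y`. Along an orbit avoiding the partition points this
gives `T^[n] (σ x) = σ (T^[n] x)`, and the claim follows by reflecting the cells.
-/

open Set Function

theorem exists_le_and_lt_succ {α : Type*} [LinearOrder α] {z : ℕ → α} {a b : ℕ} {y : α}
    (hab : a ≤ b) (ha : z a ≤ y) (hb : y < z b) :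
    ∃ k, a ≤ k ∧ k < b ∧ z k ≤ y ∧ y < z (k + 1) := by
  induction b, hab using Nat.le_induction with
  | base => exact absurd hb ha.not_gt
  | succ b hab ih =>
    rcases le_or_gt (z b) y with hzb | hzb
    · exact ⟨b, hab, b.lt_succ_self, hzb, hb⟩
    · obtain ⟨k, hak, hkb, hk⟩ := ih hzb
      exact ⟨k, hak, hkb.trans b.lt_succ_self, hk⟩

theorem iterate_comm_of_comm_on_orbit {α : Type*} {f σ : α → α} {x : α}
    (h : ∀ n, f (σ (f^[n] x)) = σ (f (f^[n] x))) (n : ℕ) : f^[n] (σ x) = σ (f^[n] x) := by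
  induction n with
  | zero => rfl
  | succ n ih => rw [iterate_succ_apply', iterate_succ_apply', ih, h]

section SymmetricPartition

variable {β L : ℝ} {M : ℕ} {z : ℕ → ℝ}

theorem add_reflect_eq_of_affine {c : ℝ}
    (hz : ∀ k, 1 ≤ k → k ≤ M → z k = c + ((k : ℝ) - 1) / β)
    (hc : 2 * c + ((M : ℝ) - 1) / β = L) (hends : z 0 + z (M + 1) = L) :
    ∀ j ≤ M + 1, z j + z (M + 1 - j) = L := by
  intro j hj
  rcases Nat.eq_zero_or_pos j with rfl | hj0
  · simpa using hends
  rcases hj.eq_or_lt with rfl | hjM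
  · simpa [add_comm] using hends
  rw [hz j hj0 (by omega), hz (M + 1 - j) (by omega) (by omega), Nat.cast_sub hj, ← hc]
  push_cast
  ring

variable (hsymm : ∀ j ≤ M + 1, z j + z (M + 1 - j) = L)
include hsymm

theorem sub_mem_Ioo_reflect {k : ℕ} (hk : k ≤ M) {y : ℝ} (hy : y ∈ Ioo (z k) (z (k + 1))) :
    L - y ∈ Ioo (z (M - k)) (z (M - k + 1)) := by
  have hlo := hsymm (k + 1) (by omega)
  have hhi := hsymm k (by omega)
  rw [show M + 1 - (k + 1) = M - k by omega] at hlo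
  rw [show M + 1 - k = M - k + 1 by omega] at hhi
  exact ⟨by linarith [hy.2], by linarith [hy.1]⟩

theorem sub_mem_Ioo_reflect_iff {k : ℕ} (hk : k ≤ M) {y : ℝ} :
    L - y ∈ Ioo (z (M - k)) (z (M - k + 1)) ↔ y ∈ Ioo (z k) (z (k + 1)) := by
  refine ⟨fun h => ?_, sub_mem_Ioo_reflect hsymm hk⟩
  simpa [Nat.sub_sub_self hk] using sub_mem_Ioo_reflect hsymm (M.sub_le k) h

theorem map_sub_eq_sub_map {T : ℝ → ℝ} (hM : 1 ≤ M) (hβL : β * L = L + M)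
    (hT0 : ∀ x : ℝ, x < z 1 → T x = β * x)
    (hTk : ∀ x : ℝ, ∀ k : ℕ, 1 ≤ k → k ≤ M - 1 → x ∈ Ico (z k) (z (k + 1)) → T x = β * x - k)
    (hTtop : ∀ x : ℝ, z M ≤ x → T x = β * x - M)
    {y : ℝ} (hy : ∀ k, 1 ≤ k → k ≤ M → y ≠ z k) : T (L - y) = L - T y := by
  have hends : z 1 + z M = L := by simpa using hsymm 1 (by omega)
  rcases lt_trichotomy y (z 1) with hy1 | hy1 | hy1
  · rw [hT0 y hy1, hTtop (L - y) (by linarith)]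
    linear_combination hβL
  · exact absurd hy1 (hy 1 le_rfl hM)
  rcases lt_trichotomy y (z M) with hyM | hyM | hyM
  · obtain ⟨k, hk1, hkM, hzk, hyk⟩ := exists_le_and_lt_succ hM hy1.le hyM
    have hσy := sub_mem_Ioo_reflect hsymm hkM.le ⟨hzk.lt_of_ne (hy k hk1 hkM.le).symm, hyk⟩
    rw [hTk y k hk1 (by omega) ⟨hzk, hyk⟩,
      hTk (L - y) (M - k) (by omega) (by omega) (Ioo_subset_Ico_self hσy), Nat.cast_sub hkM.le]
    linear_combination hβL
  · exact absurd hyM (hy M hM le_rfl)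
  · rw [hTtop y hyM.le, hT0 (L - y) (by linarith)]
    linear_combination hβL

end SymmetricPartition

theorem stmt14_general (β : ℝ) (hβ : 2 < β)
    (z : ℕ → ℝ)
    (hz0 : z 0 = (⌊β⌋₊ : ℝ) / (2 * (β - 1)) - 1 / 2)
    (hzk : ∀ k : ℕ, 1 ≤ k → k ≤ ⌊β⌋₊ →
      z k = ((⌊β⌋₊ : ℝ) / (β - 1) - ((⌊β⌋₊ : ℝ) - 1) / β) / 2 + ((k : ℝ) - 1) / β)
    (hztop : z (⌊β⌋₊ + 1) = z 0 + 1)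
    (T : ℝ → ℝ)
    (hT0 : ∀ x : ℝ, x < z 1 → T x = β * x)
    (hTk : ∀ x : ℝ, ∀ k : ℕ, 1 ≤ k → k ≤ ⌊β⌋₊ - 1 →
      x ∈ Set.Ico (z k) (z (k + 1)) → T x = β * x - k)
    (hTtop : ∀ x : ℝ, z ⌊β⌋₊ ≤ x → T x = β * x - ⌊β⌋₊)
    (x : ℝ)
    (hgen : ∀ n : ℕ, ∀ k ≤ ⌊β⌋₊ + 1, T^[n] x ≠ z k) :
    ∀ n : ℕ, ∀ k ≤ ⌊β⌋₊,
      (T^[n] x ∈ Set.Ioo (z k) (z (k + 1)) ↔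
        T^[n] ((⌊β⌋₊ : ℝ) / (β - 1) - x) ∈ Set.Ioo (z (⌊β⌋₊ - k)) (z (⌊β⌋₊ - k + 1))) := by
  set M := ⌊β⌋₊
  set L : ℝ := (M : ℝ) / (β - 1) with hL
  have hM : 1 ≤ M := Nat.le_floor (by push_cast; linarith)
  have hβ1 : β - 1 ≠ 0 := by linarith
  have hβL : β * L = L + M := by
    rw [hL]
    field_simp
    ring
  have hsymm : ∀ j ≤ M + 1, z j + z (M + 1 - j) = L :=
    add_reflect_eq_of_affine hzk (by ring) (by rw [hztop, hz0, hL]; field_simp; ring)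
  have horbit : ∀ n, T^[n] (L - x) = L - T^[n] x :=
    iterate_comm_of_comm_on_orbit fun n =>
      map_sub_eq_sub_map hsymm hM hβL hT0 hTk hTtop fun k _ hk => hgen n k (by omega)
  intro n k hk
  rw [horbit n, sub_mem_Ioo_reflect_iff hsymm hk]

theorem stmt14 (β : ℝ) (hβ : 2 < β) (hni : ∀ n : ℕ, β ≠ n)
    (z : ℕ → ℝ)
    (hz0 : z 0 = (⌊β⌋₊ : ℝ) / (2 * (β - 1)) - 1 / 2)
    (hzk : ∀ k : ℕ, 1 ≤ k → k ≤ ⌊β⌋₊ →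
      z k = ((⌊β⌋₊ : ℝ) / (β - 1) - ((⌊β⌋₊ : ℝ) - 1) / β) / 2 + ((k : ℝ) - 1) / β)
    (hztop : z (⌊β⌋₊ + 1) = z 0 + 1)
    (T : ℝ → ℝ)
    (hT0 : ∀ x : ℝ, x < z 1 → T x = β * x)
    (hTk : ∀ x : ℝ, ∀ k : ℕ, 1 ≤ k → k ≤ ⌊β⌋₊ - 1 →
      x ∈ Set.Ico (z k) (z (k + 1)) → T x = β * x - k)
    (hTtop : ∀ x : ℝ, z ⌊β⌋₊ ≤ x → T x = β * x - ⌊β⌋₊)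
    (x : ℝ) (hx : x ∈ Set.Icc 0 ((⌊β⌋₊ : ℝ) / (β - 1)))
    (hgen : ∀ n : ℕ, ∀ k ≤ ⌊β⌋₊ + 1, T^[n] x ≠ z k) :
    ∀ n : ℕ, ∀ k ≤ ⌊β⌋₊,
      (T^[n] x ∈ Set.Ioo (z k) (z (k + 1)) ↔
        T^[n] ((⌊β⌋₊ : ℝ) / (β - 1) - x) ∈ Set.Ioo (z (⌊β⌋₊ - k)) (z (⌊β⌋₊ - k + 1))) :=
  stmt14_general β hβ z hz0 hzk hztop T hT0 hTk hTtop x hgen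
end

section
/- Let β ∈ (1,2) with β^m = β^{m−1}+⋯+β+1 for an integer m ≥ 2, b ∈ [0, 1/(β−1) − 1), and let h(x) = Σ_{n=0}^{m−1} β^{−n}(𝟙_{[0,T^n(b+1)]}(x) − 𝟙_{[0,T^n(b)]}(x)) with T as above. Then h(x) ≥ 1 for Lebesgue almost every x ∈ [b, b+1]. -/
open MeasureTheory

theorem stmt19 (β : ℝ) (m : ℕ) (hm : 2 ≤ m) (hβ : β ∈ Set.Ioo (1 : ℝ) 2)
    (hpg : β ^ m = ∑ i ∈ Finset.range m, β ^ i)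
    (b : ℝ) (hb : b ∈ Set.Ico 0 (1 / (β - 1) - 1))
    (T : ℝ → ℝ) (hT : ∀ x, T x = if x < (b + 1) / β then β * x else β * x - 1)
    (h : ℝ → ℝ)
    (hh : ∀ x, h x = ∑ n ∈ Finset.range m,
      ((Set.Icc (0 : ℝ) (T^[n] (b + 1))).indicator (fun _ => (1 : ℝ)) x -
        (Set.Icc (0 : ℝ) (T^[n] b)).indicator (fun _ => (1 : ℝ)) x) / β ^ n) :
    ∀ᵐ x ∂(volume.restrict (Set.Icc b (b + 1))), 1 ≤ h x := by
  obtain ⟨hβ1, hβ2⟩ := hβ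
  obtain ⟨hb0, hb1⟩ := hb
  have hβ0 : (0:ℝ) < β := by linarith
  have hβm1 : (0:ℝ) < β - 1 := by linarith
  have h2β : (0:ℝ) < 2 - β := by linarith
  set d : ℝ := 1 / (β - 1) with hd_def
  have hd : d * (β - 1) = 1 := by
    rw [hd_def]; field_simp
  have hd0 : 0 < d := by positivity
  have hdb : 0 < d - 1 - b := by linarith
  have hgeom : ∑ i ∈ Finset.range m, β ^ i = (β ^ m - 1) / (β - 1) :=
    geom_sum_eq (by linarith) m
  have hkey : β ^ m * (2 - β) = 1 := by
    rw [hgeom] at hpg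
    have : β ^ m * (β - 1) = β ^ m - 1 := by
      field_simp at hpg; linarith
    nlinarith [this]
  have hpow : ∀ n, n ≤ m → β ^ n ≤ β ^ m := fun n hn =>
    pow_le_pow_right₀ (le_of_lt hβ1) hn
  have hbm : β ^ m * b < b + 1 := by
    nlinarith [hkey, hd, mul_lt_mul_of_pos_right hb1 (mul_pos h2β hβm1), pow_pos hβ0 m]
  -- explicit formulas for the iterates
  have H : ∀ n, n + 1 ≤ m →
      T^[n] b = β ^ n * b ∧ T^[n] (b + 1) = d - β ^ n * (d - 1 - b) := by
    intro n
    induction n with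
    | zero =>
      intro _
      constructor <;> · simp only [Function.iterate_zero, id_eq, pow_zero]; ring
    | succ n ih =>
      intro hn
      obtain ⟨ih1, ih2⟩ := ih (by omega)
      have hple : β ^ (n + 1) ≤ β ^ m := hpow (n + 1) (by omega)
      constructor
      · rw [Function.iterate_succ_apply', ih1, hT]
        rw [if_pos]
        · rw [pow_succ]; ring
        · rw [lt_div_iff₀ hβ0]
          have h1 : β ^ n * b * β = β ^ (n + 1) * b := by rw [pow_succ]; ring
          nlinarith [mul_le_mul_of_nonneg_right hple hb0]
      · rw [Function.iterate_succ_apply', ih2, hT]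
        rw [if_neg]
        · rw [pow_succ]; linear_combination hd
        · rw [not_lt, div_le_iff₀ hβ0]
          have h1 : β ^ (n + 1) * (d - 1 - b) ≤ β ^ m * (d - 1 - b) :=
            mul_le_mul_of_nonneg_right hple (le_of_lt hdb)
          have h3 : β ^ m * (d - 1 - b) * (2 - β) = d - 1 - b := by
            linear_combination (d - 1 - b) * hkey
          have step1 : b + 1 ≤ d * β - β ^ m * (d - 1 - b) := by
            nlinarith [hd, h3, hβ0, h2β, hb0, hβm1]
          have step2 : d * β - β ^ (n + 1) * (d - 1 - b) = (d - β ^ n * (d - 1 - b)) * β := by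
            rw [pow_succ]; ring
          linarith
  have Hle : ∀ n, n + 1 ≤ m → T^[n] b ≤ T^[n] (b + 1) := by
    intro n hn
    obtain ⟨e1, e2⟩ := H n hn
    rw [e1, e2]
    have h1 : β ^ n * (2 - β) ≤ β ^ m * (2 - β) :=
      mul_le_mul_of_nonneg_right (hpow n (by omega)) (le_of_lt h2β)
    nlinarith [hkey, hd, h1, hd0]
  -- almost everywhere facts
  have hae1 : ∀ᵐ x ∂(volume.restrict (Set.Icc b (b + 1))), x ∈ Set.Icc b (b + 1) :=
    ae_restrict_mem measurableSet_Icc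
  have hae2 : ∀ᵐ x ∂(volume.restrict (Set.Icc b (b + 1))), x ≠ b := by
    refine ae_iff.2 ?_
    have hset : {x : ℝ | ¬ x ≠ b} = {b} := by ext y; simp
    rw [hset, Measure.restrict_apply (measurableSet_singleton b)]
    exact measure_mono_null Set.inter_subset_left (by simp)
  filter_upwards [hae1, hae2] with x hx hxb
  rw [hh x]
  obtain ⟨k, rfl⟩ := Nat.exists_eq_succ_of_ne_zero (show m ≠ 0 by omega)
  rw [Finset.sum_range_succ']
  have hxb' : b < x := lt_of_le_of_ne hx.1 (Ne.symm hxb)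
  have e0 : ((Set.Icc (0 : ℝ) (T^[0] (b + 1))).indicator (fun _ => (1 : ℝ)) x -
      (Set.Icc (0 : ℝ) (T^[0] b)).indicator (fun _ => (1 : ℝ)) x) / β ^ 0 = 1 := by
    simp only [Function.iterate_zero, id_eq, pow_zero, div_one]
    rw [Set.indicator_of_mem (Set.mem_Icc.mpr ⟨le_trans hb0 hx.1, hx.2⟩),
      Set.indicator_of_notMem (fun hmem => absurd hmem.2 (not_le.2 hxb'))]
    norm_num
  have hs : 0 ≤ ∑ i ∈ Finset.range k,
      ((Set.Icc (0 : ℝ) (T^[i + 1] (b + 1))).indicator (fun _ => (1 : ℝ)) x -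
        (Set.Icc (0 : ℝ) (T^[i + 1] b)).indicator (fun _ => (1 : ℝ)) x) / β ^ (i + 1) := by
    refine Finset.sum_nonneg fun i hi => ?_
    have hik : i < k := Finset.mem_range.mp hi
    apply div_nonneg
    · rw [sub_nonneg]
      exact Set.indicator_le_indicator_of_subset
        (Set.Icc_subset_Icc_right (Hle (i + 1) (by omega))) (fun _ => zero_le_one) x
    · positivity
  linarith
end
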